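/- Let v^{(1)},...,v^{(s)} ∈ ℝ^{t+1} where each v^{(a)} has exactly two nonzero entries: v^{(a)}_{i(a)} = -w_a and v^{(a)}_{i'(a)} = w_a with w_a > 0 and i(a) < i'(a) ≤ j* ≤ t. Let d'' = Σ_a v^{(a)} and suppose Σ_{j≤i} d''_j ≤ 0 for all i and (1/(t+1))Σ_{i=0}^t |Σ_{j≤i} d''_j| ≤ 20/t. Then Σ_{j≤j*} d''_j 2^{jε̃} ≤ 40 ε̃ · 2^{j* ε̃} for any ε̃ ∈ (0,1]. -/

import Mathlib

/-!
Write each `v a` as the transport of mass `w a` from `i a` to `i' a`. Summing prefix sums is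
Abel summation against the weight `n - j`, so the averaged prefix sums equal the total cost
`∑ w a (i' a - i a)` divided by `t + 1`, whence the cost is at most `40`. Against the weight
`2 ^ (j ε)` a transport contributes `w (2 ^ (i' ε) - 2 ^ (i ε))`, and convexity of `exp`
bounds this by `w (i' - i) ε 2 ^ (i' ε)` (using `log 2 ≤ 1`).
-/

open scoped BigOperators

open Finset Real

def transport (i i' : ℕ) (w : ℝ) (j : ℕ) : ℝ :=
  (if j = i' then w else 0) - (if j = i then w else 0)

theorem eq_transport {v : ℕ → ℝ} {i i' : ℕ} {w : ℝ} (hvi : v i = -w) (hvi' : v i' = w)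
    (hv : ∀ j, j ≠ i → j ≠ i' → v j = 0) (hii' : i ≠ i') : v = transport i i' w := by
  funext j
  by_cases hj : j = i
  · subst hj; simp [transport, hvi, hii']
  by_cases hj' : j = i'
  · subst hj'; simp [transport, hvi', hj]
  · simp [transport, hv j hj hj', hj, hj']

theorem sum_range_transport_mul {i i' n : ℕ} (w : ℝ) (f : ℕ → ℝ) (hi : i < n) (hi' : i' < n) :
    ∑ j ∈ range n, transport i i' w j * f j = w * (f i' - f i) := by
  simp [transport, sub_mul, sum_sub_distrib, ite_mul, hi, hi', mul_sub]

theorem sum_range_sum_range_succ {R : Type*} [CommRing R] (u : ℕ → R) (n : ℕ) :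
    ∑ k ∈ range n, ∑ j ∈ range (k + 1), u j = ∑ j ∈ range n, u j * (n - j) := by
  induction n with
  | zero => simp
  | succ n ih =>
    rw [sum_range_succ, ih, sum_range_succ _ n, sum_range_succ _ n]
    push_cast
    simp only [mul_add, mul_one, sum_add_distrib, add_sub_right_comm]
    ring

theorem rpow_sub_rpow_le_log_mul {b : ℝ} (hb : 0 < b) (x y : ℝ) :
    b ^ y - b ^ x ≤ Real.log b * (y - x) * b ^ y := by
  have h := Real.add_one_le_exp (Real.log b * (x - y))
  have hsplit : b ^ x = b ^ y * Real.exp (Real.log b * (x - y)) := by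
    rw [rpow_def_of_pos hb, rpow_def_of_pos hb, ← Real.exp_add]; ring_nf
  rw [hsplit]
  nlinarith [rpow_pos_of_pos hb y]

theorem sum_prefix_sums_transport {ι : Type*} (A : Finset ι) {i i' : ι → ℕ} (w : ι → ℝ)
    {n : ℕ} (hi : ∀ a, i a < n) (hi' : ∀ a, i' a < n) :
    ∑ k ∈ range n, ∑ j ∈ range (k + 1), ∑ a ∈ A, transport (i a) (i' a) (w a) j
      = -∑ a ∈ A, w a * ((i' a : ℝ) - i a) := by
  rw [sum_range_sum_range_succ]
  simp_rw [sum_mul]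
  rw [sum_comm, ← sum_neg_distrib]
  refine sum_congr rfl fun a _ => ?_
  rw [sum_range_transport_mul _ _ (hi a) (hi' a)]
  ring

theorem two_rpow_sub_two_rpow_le {x y : ℝ} (hxy : x ≤ y) :
    (2 : ℝ) ^ y - 2 ^ x ≤ (y - x) * 2 ^ y := by
  have hlog : Real.log 2 ≤ 1 := by linarith [Real.log_le_sub_one_of_pos (zero_lt_two' ℝ)]
  calc (2 : ℝ) ^ y - 2 ^ x ≤ Real.log 2 * (y - x) * 2 ^ y := rpow_sub_rpow_le_log_mul two_pos x y
    _ ≤ (y - x) * 2 ^ y := by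
      gcongr
      nlinarith [rpow_pos_of_pos (zero_lt_two' ℝ) y, sub_nonneg.2 hxy]

theorem stmt_7_general (t jstar : ℕ) (ht : 1 ≤ t) (hjstar : jstar ≤ t)
    (εt : ℝ) (hεt0 : 0 < εt)
    (s : ℕ) (v : Fin s → ℕ → ℝ) (ia i'a : Fin s → ℕ) (w : Fin s → ℝ)
    (hv : ∀ a : Fin s,
        ia a < i'a a ∧ i'a a ≤ jstar ∧ 0 < w a ∧
        v a (ia a) = -(w a) ∧ v a (i'a a) = w a ∧
        ∀ j, j ≠ ia a → j ≠ i'a a → v a j = 0)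
    (d'' : ℕ → ℝ) (hd : ∀ j, d'' j = ∑ a, v a j)
    (hprefix : ∀ i, ∑ j ∈ Finset.range (i+1), d'' j ≤ 0)
    (havg : (1/((t:ℝ)+1)) * ∑ i ∈ Finset.range (t+1),
              |∑ j ∈ Finset.range (i+1), d'' j| ≤ 20 / t) :
    ∑ j ∈ Finset.range (jstar+1), d'' j * (2:ℝ) ^ ((j:ℝ) * εt)
      ≤ 40 * εt * (2:ℝ) ^ ((jstar:ℝ) * εt) := by
  have hd' : d'' = fun j => ∑ a, transport (ia a) (i'a a) (w a) j := by
    funext j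
    refine (hd j).trans (sum_congr rfl fun a _ => ?_)
    obtain ⟨hlt, -, -, hvi, hvi', hz⟩ := hv a
    rw [eq_transport hvi hvi' hz hlt.ne]
  have hmass : ∑ a, w a * ((i'a a : ℝ) - ia a) ≤ 40 := by
    rw [sum_congr rfl fun i _ => abs_of_nonpos (hprefix i), sum_neg_distrib, hd',
      sum_prefix_sums_transport _ _ (fun a => by have := hv a; omega)
        (fun a => by have := hv a; omega), neg_neg, one_div,
      inv_mul_le_iff₀ (by positivity)] at havg
    have ht' : (1 : ℝ) ≤ t := by exact_mod_cast ht
    calc _ ≤ ((t : ℝ) + 1) * (20 / t) := havg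
      _ = 20 + 20 / t := by field_simp
      _ ≤ 40 := by linarith [div_le_self (by norm_num : (0 : ℝ) ≤ 20) ht']
  have hweighted : ∑ j ∈ range (jstar + 1), d'' j * (2 : ℝ) ^ ((j : ℝ) * εt)
      = ∑ a, w a * ((2 : ℝ) ^ ((i'a a : ℝ) * εt) - 2 ^ ((ia a : ℝ) * εt)) := by
    simp_rw [hd', sum_mul]
    rw [sum_comm]
    refine sum_congr rfl fun a _ => ?_
    exact sum_range_transport_mul _ (fun j : ℕ => (2 : ℝ) ^ ((j : ℝ) * εt))
      (by have := hv a; omega) (by have := hv a; omega)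
  have hstep : ∀ a, (2 : ℝ) ^ ((i'a a : ℝ) * εt) - 2 ^ ((ia a : ℝ) * εt)
      ≤ εt * 2 ^ ((jstar : ℝ) * εt) * ((i'a a : ℝ) - ia a) := fun a => by
    obtain ⟨hlt, hle, -⟩ := hv a
    have hlt' : (ia a : ℝ) ≤ i'a a := by exact_mod_cast hlt.le
    have hle' : (i'a a : ℝ) ≤ jstar := by exact_mod_cast hle
    calc _ ≤ ((i'a a : ℝ) * εt - ia a * εt) * 2 ^ ((i'a a : ℝ) * εt) :=
          two_rpow_sub_two_rpow_le (by gcongr)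
      _ ≤ ((i'a a : ℝ) * εt - ia a * εt) * 2 ^ ((jstar : ℝ) * εt) := by
          gcongr
          · nlinarith
          · norm_num
      _ = _ := by ring
  calc _ = ∑ a, w a * ((2 : ℝ) ^ ((i'a a : ℝ) * εt) - 2 ^ ((ia a : ℝ) * εt)) := hweighted
    _ ≤ ∑ a, w a * (εt * 2 ^ ((jstar : ℝ) * εt) * ((i'a a : ℝ) - ia a)) :=
        sum_le_sum fun a _ => mul_le_mul_of_nonneg_left (hstep a) (hv a).2.2.1.le
    _ = εt * 2 ^ ((jstar : ℝ) * εt) * ∑ a, w a * ((i'a a : ℝ) - ia a) := by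
        rw [mul_sum]; exact sum_congr rfl fun a _ => by ring
    _ ≤ εt * 2 ^ ((jstar : ℝ) * εt) * 40 := by gcongr
    _ = 40 * εt * (2 : ℝ) ^ ((jstar : ℝ) * εt) := by ring

/-- bounding the weighted sum of a transport decomposition. -/
theorem stmt_7 (t jstar m : ℕ) (ht : 1 ≤ t) (hjstar : jstar ≤ t)
    (εt : ℝ) (hεt0 : 0 < εt) (hεt1 : εt ≤ 1)
    (s : ℕ) (v : Fin s → ℕ → ℝ) (ia i'a : Fin s → ℕ) (w : Fin s → ℝ)
    (hv : ∀ a : Fin s,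
        ia a < i'a a ∧ i'a a ≤ jstar ∧ 0 < w a ∧
        v a (ia a) = -(w a) ∧ v a (i'a a) = w a ∧
        ∀ j, j ≠ ia a → j ≠ i'a a → v a j = 0)
    (d'' : ℕ → ℝ) (hd : ∀ j, d'' j = ∑ a, v a j)
    (hprefix : ∀ i, ∑ j ∈ Finset.range (i+1), d'' j ≤ 0)
    (havg : (1/((t:ℝ)+1)) * ∑ i ∈ Finset.range (t+1),
              |∑ j ∈ Finset.range (i+1), d'' j| ≤ 20 / t) :
    ∑ j ∈ Finset.range (jstar+1), d'' j * (2:ℝ) ^ ((j:ℝ) * εt)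
      ≤ 40 * εt * (2:ℝ) ^ ((jstar:ℝ) * εt) :=
  stmt_7_general t jstar ht hjstar εt hεt0 s v ia i'a w hv d'' hd hprefix havg
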